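/- Let 𝒪 ⊂ ℝⁿ be a nonempty compact set with δ = sup_{y∈𝒪}‖y‖, and let 𝔰 = {B skew-symmetric : exp(tB)·𝒪 = 𝒪 for all t ∈ ℝ}. Assume the exponentials of 𝔰 act transitively on 𝒪, i.e., for all y, z ∈ 𝒪 there exists B ∈ 𝔰 with exp(B)y = z. Let β ≥ 0 and suppose there is a single orthogonal matrix Q such that ĥ := {QᵀBQ : B ∈ 𝔰} satisfies ‖QᵀBQ − B‖ ≤ β for every B ∈ 𝔰. Then for every x ∈ ℝⁿ, the (symmetric) Hausdorff distance between the set Ô_x = {exp(A)x : A ∈ ĥ} and 𝒪 is at most (β + 1)·dist(x, 𝒪) + β δ. -/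

import Mathlib

/-!
Let `y ∈ O` be a point nearest to `x`. By invariance and transitivity, the points `exp(B) y`
with `B ∈ 𝔰` sweep out exactly `O`, so it suffices to show that `exp(QᵀBQ) x` lies within
`dist(x, O) + βδ` of `exp(B) y`. Since `QᵀBQ` is again skew, `exp(QᵀBQ)` is orthogonal, which
accounts for `dist(x, y)`. The rest is the estimate `‖exp a - exp b‖ ≤ ‖a - b‖` for skew-adjoint
`a, b` in a C⋆-algebra: the derivative of `t ↦ exp(t a) exp((1 - t) b)` is
`exp(t a) (a - b) exp((1 - t) b)`, whose outer factors are unitary. In the L² operator norm this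
applies to matrices, and the operator norm is dominated by the Frobenius norm.
-/

open Matrix

/-- Frobenius norm of a real square matrix. -/
noncomputable def frobNorm {n : ℕ} (M : Matrix (Fin n) (Fin n) ℝ) : ℝ :=
  Real.sqrt (∑ i, ∑ j, (M i j) ^ 2)

open NormedSpace

theorem hasDerivAt_exp_smul_mul_exp_one_sub_smul {𝕂 E : Type*} [RCLike 𝕂] [NormedRing E]
    [NormedAlgebra 𝕂 E] [CompleteSpace E] (a b : E) (t : 𝕂) :
    HasDerivAt (fun u : 𝕂 => exp (u • a) * exp ((1 - u) • b))
      (exp (t • a) * (a - b) * exp ((1 - t) • b)) t := by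
  have hb := (hasDerivAt_exp_smul_const' (𝕂 := 𝕂) b (1 - t)).scomp t
    ((hasDerivAt_id t).const_sub 1)
  refine ((hasDerivAt_exp_smul_const' a t).mul hb).congr_deriv ?_
  rw [((Commute.refl a).smul_right t).exp_right.eq, Function.comp_apply, neg_one_smul]
  noncomm_ring

theorem norm_exp_sub_exp_le_of_mem_skewAdjoint {E : Type*} [NormedRing E] [NormedAlgebra ℝ E]
    [CompleteSpace E] [StarRing E] [CStarRing E] [StarModule ℝ E] {a b : E}
    (ha : a ∈ skewAdjoint E) (hb : b ∈ skewAdjoint E) : ‖exp a - exp b‖ ≤ ‖a - b‖ := by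
  -- `exp_mem_unitary_of_mem_skewAdjoint` asks for a normed `ℚ`-algebra structure
  let +nondep : NormedAlgebra ℚ E := .restrictScalars ℚ ℝ E
  have bound (t : ℝ) : ‖exp (t • a) * (a - b) * exp ((1 - t) • b)‖ ≤ ‖a - b‖ := by
    rw [CStarRing.norm_mul_mem_unitary _
        (exp_mem_unitary_of_mem_skewAdjoint (skewAdjoint.smul_mem _ hb)),
      CStarRing.norm_mem_unitary_mul _
        (exp_mem_unitary_of_mem_skewAdjoint (skewAdjoint.smul_mem _ ha))]
  simpa using norm_image_sub_le_of_norm_deriv_le_segment_01'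
    (fun t _ => (hasDerivAt_exp_smul_mul_exp_one_sub_smul a b t).hasDerivWithinAt)
    (fun t _ => bound t)

theorem Matrix.mem_skewAdjoint_iff_transpose_eq_neg {ι α : Type*} [AddCommGroup α]
    [StarAddMonoid α] [TrivialStar α] {A : Matrix ι ι α} :
    A ∈ skewAdjoint (Matrix ι ι α) ↔ Aᵀ = -A := by
  rw [skewAdjoint.mem_iff, star_eq_conjTranspose, conjTranspose_eq_transpose_of_trivial]

theorem Matrix.norm_toEuclideanLin_of_mem_unitary {𝕜 ι : Type*} [RCLike 𝕜] [Fintype ι]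
    [DecidableEq ι] {U : Matrix ι ι 𝕜} (hU : U ∈ unitary (Matrix ι ι 𝕜))
    (x : EuclideanSpace 𝕜 ι) : ‖toEuclideanLin U x‖ = ‖x‖ :=
  (toEuclideanCLM (n := ι) (𝕜 := 𝕜) U).norm_map_of_mem_unitary
    (Unitary.map_mem toEuclideanCLM hU) x

theorem frobNorm_nonneg {n : ℕ} (M : Matrix (Fin n) (Fin n) ℝ) : 0 ≤ frobNorm M :=
  Real.sqrt_nonneg _

theorem norm_toEuclideanLin_le_frobNorm_mul {n : ℕ} (M : Matrix (Fin n) (Fin n) ℝ)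
    (v : EuclideanSpace ℝ (Fin n)) : ‖toEuclideanLin M v‖ ≤ frobNorm M * ‖v‖ := by
  simp only [EuclideanSpace.norm_eq, Real.norm_eq_abs, sq_abs, frobNorm]
  rw [← Real.sqrt_mul (by positivity), Finset.sum_mul]
  gcongr with i
  simpa [toLpLin_apply, mulVec, dotProduct] using
    Finset.sum_mul_sq_le_sq_mul_sq Finset.univ (M i) v

section L2Operator

open scoped Matrix.Norms.L2Operator

theorem Matrix.norm_toEuclideanLin_le_l2_opNorm_mul {𝕜 ι : Type*} [RCLike 𝕜] [Fintype ι]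
    [DecidableEq ι] (M : Matrix ι ι 𝕜) (x : EuclideanSpace 𝕜 ι) :
    ‖toEuclideanLin M x‖ ≤ ‖M‖ * ‖x‖ :=
  (toEuclideanCLM (n := ι) (𝕜 := 𝕜) M).le_opNorm x

theorem l2_opNorm_le_frobNorm {n : ℕ} (M : Matrix (Fin n) (Fin n) ℝ) : ‖M‖ ≤ frobNorm M :=
  (toEuclideanCLM (n := Fin n) (𝕜 := ℝ) M).opNorm_le_bound (frobNorm_nonneg M)
    (norm_toEuclideanLin_le_frobNorm_mul M)

theorem dist_toEuclideanLin_exp_le {n : ℕ} {A B : Matrix (Fin n) (Fin n) ℝ}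
    (hA : A ∈ skewAdjoint (Matrix (Fin n) (Fin n) ℝ))
    (hB : B ∈ skewAdjoint (Matrix (Fin n) (Fin n) ℝ)) (x y : EuclideanSpace ℝ (Fin n)) :
    dist (toEuclideanLin (exp A) x) (toEuclideanLin (exp B) y) ≤
      dist x y + frobNorm (A - B) * ‖y‖ := by
  let +nondep : NormedAlgebra ℚ (Matrix (Fin n) (Fin n) ℝ) := .restrictScalars ℚ ℝ _
  have hsplit : toEuclideanLin (exp A) x - toEuclideanLin (exp B) y =
      toEuclideanLin (exp A) (x - y) + toEuclideanLin (exp A - exp B) y := by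
    rw [map_sub, map_sub, LinearMap.sub_apply]
    abel
  rw [dist_eq_norm, hsplit, dist_eq_norm]
  grw [norm_add_le, norm_toEuclideanLin_of_mem_unitary (exp_mem_unitary_of_mem_skewAdjoint hA),
    norm_toEuclideanLin_le_l2_opNorm_mul, norm_exp_sub_exp_le_of_mem_skewAdjoint hA hB,
    l2_opNorm_le_frobNorm]

end L2Operator

theorem Metric.hausdorffDist_image_le_of_dist_le {ι X : Type*} [PseudoMetricSpace X]
    {s : Set ι} {f g : ι → X} {r : ℝ} (hr : 0 ≤ r) (h : ∀ i ∈ s, dist (f i) (g i) ≤ r) :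
    hausdorffDist (f '' s) (g '' s) ≤ r :=
  hausdorffDist_le_of_mem_dist hr (fun _ ⟨i, hi, hfi⟩ => ⟨g i, ⟨i, hi, rfl⟩, hfi ▸ h i hi⟩)
    fun _ ⟨i, hi, hgi⟩ => ⟨f i, ⟨i, hi, rfl⟩, hgi ▸ dist_comm (f i) (g i) ▸ h i hi⟩

theorem stmt10_general {n : ℕ} (O : Set (EuclideanSpace ℝ (Fin n)))
    (hOne : O.Nonempty) (hOcpt : IsCompact O)
    (δ : ℝ) (hδ : IsLUB ((fun y => ‖y‖) '' O) δ)
    (s : Set (Matrix (Fin n) (Fin n) ℝ))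
    (hs : s = {B | Bᵀ = -B ∧ ∀ t : ℝ,
      (⇑(Matrix.toEuclideanLin (NormedSpace.exp (t • B)))) '' O = O})
    (htrans : ∀ y ∈ O, ∀ z ∈ O, ∃ B ∈ s,
      Matrix.toEuclideanLin (NormedSpace.exp B) y = z)
    (β : ℝ) (hβ : 0 ≤ β)
    (Q : Matrix (Fin n) (Fin n) ℝ)
    (hclose : ∀ B ∈ s, frobNorm (Qᵀ * B * Q - B) ≤ β) :
    ∀ x : EuclideanSpace ℝ (Fin n),
      Metric.hausdorffDist
        ((fun B => Matrix.toEuclideanLin (NormedSpace.exp (Qᵀ * B * Q)) x) '' s) O ≤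
        (β + 1) * Metric.infDist x O + β * δ := by
  intro x
  have hmem : ∀ B ∈ s, B ∈ skewAdjoint (Matrix (Fin n) (Fin n) ℝ) ∧
      toEuclideanLin (exp B) '' O = O := by
    rw [hs]
    rintro B ⟨hskew, hinv⟩
    exact ⟨mem_skewAdjoint_iff_transpose_eq_neg.2 hskew, by simpa only [one_smul] using hinv 1⟩
  obtain ⟨y, hyO, hxy⟩ := hOcpt.exists_infDist_eq_dist hOne x
  have hyδ : ‖y‖ ≤ δ := hδ.1 ⟨y, hyO, rfl⟩
  have horbit : (fun B => toEuclideanLin (exp B) y) '' s = O := by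
    refine subset_antisymm ?_ fun z hz => htrans y hyO z hz
    rintro _ ⟨B, hB, rfl⟩
    exact (hmem B hB).2 ▸ Set.mem_image_of_mem _ hyO
  have hdist : ∀ B ∈ s, dist (toEuclideanLin (exp (Qᵀ * B * Q)) x) (toEuclideanLin (exp B) y) ≤
      Metric.infDist x O + β * δ := by
    intro B hB
    have hconj : Qᵀ * B * Q ∈ skewAdjoint (Matrix (Fin n) (Fin n) ℝ) := by
      simpa [star_eq_conjTranspose] using skewAdjoint.conjugate' (hmem B hB).1 Q
    grw [dist_toEuclideanLin_exp_le hconj (hmem B hB).1, hclose B hB, hyδ, hxy]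
  have hHausdorff := Metric.hausdorffDist_image_le_of_dist_le
    (add_nonneg Metric.infDist_nonneg (mul_nonneg hβ ((norm_nonneg y).trans hyδ))) hdist
  rw [horbit] at hHausdorff
  have := mul_nonneg hβ (Metric.infDist_nonneg (x := x) (s := O))
  linarith

theorem stmt10 {n : ℕ} (O : Set (EuclideanSpace ℝ (Fin n)))
    (hOne : O.Nonempty) (hOcpt : IsCompact O)
    (δ : ℝ) (hδ : IsLUB ((fun y => ‖y‖) '' O) δ)
    (s : Set (Matrix (Fin n) (Fin n) ℝ))
    (hs : s = {B | Bᵀ = -B ∧ ∀ t : ℝ,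
      (⇑(Matrix.toEuclideanLin (NormedSpace.exp (t • B)))) '' O = O})
    (htrans : ∀ y ∈ O, ∀ z ∈ O, ∃ B ∈ s,
      Matrix.toEuclideanLin (NormedSpace.exp B) y = z)
    (β : ℝ) (hβ : 0 ≤ β)
    (Q : Matrix (Fin n) (Fin n) ℝ) (hQ : Qᵀ * Q = 1)
    (hclose : ∀ B ∈ s, frobNorm (Qᵀ * B * Q - B) ≤ β) :
    ∀ x : EuclideanSpace ℝ (Fin n),
      Metric.hausdorffDist
        ((fun B => Matrix.toEuclideanLin (NormedSpace.exp (Qᵀ * B * Q)) x) '' s) O ≤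
        (β + 1) * Metric.infDist x O + β * δ :=
  stmt10_general O hOne hOcpt δ hδ s hs htrans β hβ Q hclose
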